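/- For all integers n, N with 0 ≤ n ≤ N and all real x, the discrete Chebyshev polynomial admits the integral representation t_n(x, N+1) = (-1)^n · (Γ(n+N+2)/(Γ(n+1) Γ(N+1-n))) · ∫_0^1 (1-t)^n t^N · ( ∑_{k=0}^n ((-n)_k (-x)_k)/((k!)^2) · (1 - 1/t)^k ) dt, where the integrand is understood via (1-t)^n t^N (1-1/t)^k = (1-t)^n t^{N-k} (t-1)^k. -/

import Mathlib

open Finset intervalIntegral

/-- Pochhammer rising factorial `(z)_k = z (z+1) ⋯ (z+k-1)`. -/
noncomputable def poch (z : ℝ) (k : ℕ) : ℝ := ∏ i ∈ Finset.range k, (z + i)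

/-- Discrete Chebyshev polynomial `t_n(x, N+1)` for `0 ≤ n ≤ N`:
`t_n(x, N+1) = (-1)^n (N+1-n)_n ∑_{k=0}^n ((-n)_k (-x)_k (n+1)_k)/((-N)_k (k!)^2)`. -/
noncomputable def tcheb (n N : ℕ) (x : ℝ) : ℝ :=
  (-1 : ℝ) ^ n * poch ((N : ℝ) + 1 - n) n *
    ∑ k ∈ Finset.range (n + 1),
      poch (-(n : ℝ)) k * poch (-x) k * poch ((n : ℝ) + 1) k /
        (poch (-(N : ℝ)) k * ((Nat.factorial k : ℝ)) ^ 2)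

lemma fac_prod (m : ℕ) : ∀ k : ℕ, m.factorial * ∏ j ∈ Finset.range k, (m + 1 + j) = (m + k).factorial
  | 0 => by simp
  | k + 1 => by
    rw [Finset.prod_range_succ, ← mul_assoc, fac_prod m k, ← add_assoc, Nat.factorial_succ]
    ring

lemma poch_nat_succ (m k : ℕ) :
    poch ((m : ℝ) + 1) k = ((m + k).factorial : ℝ) / (m.factorial : ℝ) := by
  have hm : (m.factorial : ℝ) ≠ 0 := Nat.cast_ne_zero.mpr m.factorial_ne_zero
  rw [eq_div_iff hm, poch, mul_comm]
  exact_mod_cast congrArg (Nat.cast : ℕ → ℝ) (fac_prod m k)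

lemma poch_neg_nat (m : ℕ) : ∀ k : ℕ, k ≤ m →
    poch (-(m : ℝ)) k = (-1 : ℝ) ^ k * (m.factorial : ℝ) / ((m - k).factorial : ℝ)
  | 0, _ => by
    simp [poch, div_self (Nat.cast_ne_zero.mpr m.factorial_ne_zero : (m.factorial : ℝ) ≠ 0)]
  | k + 1, hk => by
    have hk' : k ≤ m := Nat.le_of_succ_le hk
    have hsub : m - k = (m - (k + 1)) + 1 := by omega
    have hterm : -(m : ℝ) + k = -((m - k : ℕ) : ℝ) := by
      push_cast [Nat.cast_sub hk']; ring
    have ih := poch_neg_nat m k hk'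
    rw [poch, Finset.prod_range_succ, ← poch, ih, hterm, pow_succ]
    have h1 : ((m - k).factorial : ℝ) = ((m - (k+1)).factorial : ℝ) * ((m - k : ℕ) : ℝ) := by
      rw [hsub, Nat.factorial_succ, ← hsub]; push_cast; ring
    have h2 : ((m - (k+1)).factorial : ℝ) ≠ 0 := Nat.cast_ne_zero.mpr (m - (k+1)).factorial_ne_zero
    have h3 : ((m - k : ℕ) : ℝ) ≠ 0 := Nat.cast_ne_zero.mpr (by omega)
    rw [h1]
    generalize ((m - k : ℕ) : ℝ) = B at h3 ⊢
    generalize ((m - (k+1)).factorial : ℝ) = F at h2 ⊢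
    field_simp

lemma beta_nat (a b : ℕ) :
    ∫ t in (0:ℝ)..1, t ^ a * (1 - t) ^ b =
      (a.factorial * b.factorial : ℝ) / ((a + b + 1).factorial) := by
  have hre : 0 < Complex.re ((a : ℂ) + 1) := by simp; positivity
  have h := Complex.betaIntegral_eval_nat_add_one_right hre b
  rw [Complex.betaIntegral] at h
  simp only [add_sub_cancel_right, Complex.cpow_natCast] at h
  have hcast : ∀ t : ℝ, (t : ℂ) ^ a * (1 - (t : ℂ)) ^ b = ((t ^ a * (1 - t) ^ b : ℝ) : ℂ) := by
    intro t; push_cast; ring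
  rw [intervalIntegral.integral_congr (g := fun t : ℝ => ((t ^ a * (1 - t) ^ b : ℝ) : ℂ))
    (fun t _ => hcast t), intervalIntegral.integral_ofReal] at h
  have ha : (a.factorial : ℂ) ≠ 0 := Nat.cast_ne_zero.mpr a.factorial_ne_zero
  have hc : (a.factorial : ℂ) * ∏ j ∈ Finset.range (b + 1), ((a : ℂ) + 1 + (j : ℂ))
      = ((a + b + 1).factorial : ℂ) := by
    have h0 := fac_prod a (b + 1)
    rw [← add_assoc] at h0
    exact_mod_cast congrArg (Nat.cast : ℕ → ℂ) h0
  have hprod : (∏ j ∈ Finset.range (b + 1), ((a : ℂ) + 1 + (j : ℂ)))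
      = ((a + b + 1).factorial : ℂ) / (a.factorial : ℂ) := by
    rw [eq_div_iff ha]; linear_combination hc
  rw [hprod] at h
  have hX : ((a + b + 1).factorial : ℂ) ≠ 0 := Nat.cast_ne_zero.mpr (a + b + 1).factorial_ne_zero
  have hfin : ((∫ t in (0:ℝ)..1, t ^ a * (1 - t) ^ b : ℝ) : ℂ)
      = ((a.factorial * b.factorial / (a + b + 1).factorial : ℝ) : ℂ) := by
    rw [h]; push_cast; field_simp
  exact_mod_cast hfin

lemma neg_one_pow_sq (k : ℕ) : ((-1 : ℝ) ^ k) * ((-1 : ℝ) ^ k) = 1 := by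
  rw [← pow_add, ← two_mul, pow_mul]; norm_num

/-- Integral representation:
`t_n(x, N+1) = (-1)^n (Γ(n+N+2)/(Γ(n+1)Γ(N+1-n))) ∫₀¹ (1-t)^n t^N ₂F₁(-n,-x;1;1-1/t) dt`,
where the integrand is understood via `(1-t)^n t^N (1-1/t)^k = (1-t)^n t^{N-k} (t-1)^k`. -/
theorem tcheb_integral_repr (n N : ℕ) (hnN : n ≤ N) (x : ℝ) :
    tcheb n N x =
      (-1 : ℝ) ^ n *
        (Real.Gamma ((n : ℝ) + (N : ℝ) + 2) /
          (Real.Gamma ((n : ℝ) + 1) * Real.Gamma ((N : ℝ) + 1 - (n : ℝ)))) *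
        ∫ t in (0 : ℝ)..1,
          (1 - t) ^ n *
            ∑ k ∈ Finset.range (n + 1),
              poch (-(n : ℝ)) k * poch (-x) k / ((Nat.factorial k : ℝ)) ^ 2 *
                (t ^ (N - k) * (t - 1) ^ k) := by
  set c : ℕ → ℝ := fun k => poch (-(n : ℝ)) k * poch (-x) k / ((Nat.factorial k : ℝ)) ^ 2 with hc
  have hint : (∫ t in (0 : ℝ)..1, (1 - t) ^ n *
        ∑ k ∈ Finset.range (n + 1), c k * (t ^ (N - k) * (t - 1) ^ k))
      = ∑ k ∈ Finset.range (n + 1),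
          c k * ((-1 : ℝ) ^ k *
            (((N - k).factorial * (n + k).factorial : ℝ) / ((N + n + 1).factorial : ℝ))) := by
    rw [intervalIntegral.integral_congr
      (g := fun t : ℝ => ∑ k ∈ Finset.range (n + 1),
        c k * ((-1 : ℝ) ^ k * (t ^ (N - k) * (1 - t) ^ (n + k))))]
    · rw [intervalIntegral.integral_finset_sum]
      · refine Finset.sum_congr rfl fun k hk => ?_
        have hkN : k ≤ N := le_trans (Nat.lt_succ_iff.mp (Finset.mem_range.mp hk)) hnN
        rw [intervalIntegral.integral_const_mul, intervalIntegral.integral_const_mul,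
          beta_nat (N - k) (n + k)]
        have : (N - k) + (n + k) + 1 = N + n + 1 := by omega
        rw [this]
      · intro k _
        apply Continuous.intervalIntegrable
        fun_prop
    · intro t _
      simp only
      rw [Finset.mul_sum]
      refine Finset.sum_congr rfl fun k _ => ?_
      have h1 : (t - 1) ^ k = (-1 : ℝ) ^ k * (1 - t) ^ k := by
        rw [show t - 1 = -(1 - t) by ring, neg_pow]
      rw [h1, pow_add]
      ring
  rw [hint]
  have hG1 : Real.Gamma ((n : ℝ) + (N : ℝ) + 2) = ((N + n + 1).factorial : ℝ) := by
    rw [show ((n : ℝ) + (N : ℝ) + 2) = ((N + n + 1 : ℕ) : ℝ) + 1 by push_cast; ring,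
      Real.Gamma_nat_eq_factorial]
  have hG2 : Real.Gamma ((n : ℝ) + 1) = (n.factorial : ℝ) := Real.Gamma_nat_eq_factorial n
  have hG3 : Real.Gamma ((N : ℝ) + 1 - (n : ℝ)) = ((N - n).factorial : ℝ) := by
    rw [show ((N : ℝ) + 1 - (n : ℝ)) = ((N - n : ℕ) : ℝ) + 1 by
      push_cast [Nat.cast_sub hnN]; ring, Real.Gamma_nat_eq_factorial]
  rw [hG1, hG2, hG3]
  rw [tcheb]
  have hP : poch ((N : ℝ) + 1 - n) n = ((N.factorial : ℝ)) / ((N - n).factorial : ℝ) := by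
    rw [show ((N : ℝ) + 1 - n) = ((N - n : ℕ) : ℝ) + 1 by push_cast [Nat.cast_sub hnN]; ring,
      poch_nat_succ, Nat.sub_add_cancel hnN]
  rw [hP, Finset.mul_sum, Finset.mul_sum]
  refine Finset.sum_congr rfl fun k hk => ?_
  have hkn : k ≤ n := Nat.lt_succ_iff.mp (Finset.mem_range.mp hk)
  have hkN : k ≤ N := le_trans hkn hnN
  rw [poch_nat_succ n k, poch_neg_nat N k hkN, hc]
  have f1 : ((N - n).factorial : ℝ) ≠ 0 := Nat.cast_ne_zero.mpr (N - n).factorial_ne_zero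
  have f2 : (n.factorial : ℝ) ≠ 0 := Nat.cast_ne_zero.mpr n.factorial_ne_zero
  have f3 : (N.factorial : ℝ) ≠ 0 := Nat.cast_ne_zero.mpr N.factorial_ne_zero
  have f4 : ((N - k).factorial : ℝ) ≠ 0 := Nat.cast_ne_zero.mpr (N - k).factorial_ne_zero
  have f5 : ((N + n + 1).factorial : ℝ) ≠ 0 := Nat.cast_ne_zero.mpr (N + n + 1).factorial_ne_zero
  have f6 : ((n + k).factorial : ℝ) ≠ 0 := Nat.cast_ne_zero.mpr (n + k).factorial_ne_zero
  have f7 : ((k.factorial : ℝ)) ^ 2 ≠ 0 := pow_ne_zero 2 (Nat.cast_ne_zero.mpr k.factorial_ne_zero)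
  have hs := neg_one_pow_sq k
  field_simp
  ring_nf
  rw [pow_mul', neg_one_sq, one_pow]
  ring
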